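/- Let f_{i,j}(X) = f(X) be the same nonconstant polynomial for all 1 ≤ i ≤ m, 1 ≤ j ≤ n with n ≥ m ≥ r ≥ 1, and suppose there exist x_{i,j} ∈ [−H,H] ∩ ℤ (1 ≤ i,j ≤ r) such that the r×r matrix (f(x_{i,j})) is nonsingular. Then the number of m×n matrices (f(x_{i,j})) with all x_{i,j} ∈ [−H,H] ∩ ℤ of rank exactly r is ≫ H^{nr} (i.e., at least c·H^{nr} for some constant c > 0 depending on f, m, n, r). -/

import Mathlib

/-!
Take the first `r` rows to be a block whose leading `r × r` minor `det (f (x i j))` is nonzero and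
let every further row repeat a row of the block: the resulting matrix has rank exactly `r` and
determines the block. The minor is a polynomial of total degree at most `r · deg f` in the `r n`
entries of the block, nonzero because of the given witness, so by Schwartz–Zippel at least half
of the `(2H + 1)^{rn}` blocks qualify once `H ≥ r · deg f`; for smaller `H` the witness suffices.
-/

open MvPolynomial Finset

theorem Polynomial.totalDegree_toMvPolynomial_le {R σ : Type*} [CommSemiring R] (p : Polynomial R)
    (i : σ) :
    (p.toMvPolynomial i).totalDegree ≤ p.natDegree := by
  conv_lhs => rw [p.as_sum_range_C_mul_X_pow]
  simp only [map_sum, map_mul, toMvPolynomial_C, map_pow, toMvPolynomial_X]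
  refine (totalDegree_finsetSum _ _).trans (Finset.sup_le fun k hk => ?_)
  rw [MvPolynomial.C_mul_X_pow_eq_monomial]
  refine (totalDegree_monomial_le _ _).trans ?_
  simpa [Nat.lt_succ_iff] using hk

theorem MvPolynomial.totalDegree_det_le {R σ ι : Type*} [CommRing R] [Fintype ι] [DecidableEq ι]
    (M : Matrix ι ι (MvPolynomial σ R)) {d : ℕ} (hM : ∀ i j, (M i j).totalDegree ≤ d) :
    M.det.totalDegree ≤ Fintype.card ι * d := by
  rw [Matrix.det_apply]
  refine (totalDegree_finsetSum _ _).trans (Finset.sup_le fun τ _ => ?_)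
  refine (totalDegree_smul_le _ _).trans ((totalDegree_finsetProd _ _).trans ?_)
  simpa using Finset.sum_le_sum fun i (_ : i ∈ univ) => hM (τ i) i

theorem MvPolynomial.card_pow_le_two_mul_card_eval_ne_zero {R σ : Type*} [CommRing R] [IsDomain R]
    [DecidableEq R] [Fintype σ] [DecidableEq σ] {p : MvPolynomial σ R} (hp : p ≠ 0)
    (S : Finset R) (hS : 2 * p.totalDegree < #S) :
    #S ^ Fintype.card σ ≤ 2 * #{x ∈ Fintype.piFinset fun _ : σ => S | eval x p ≠ 0} := by
  set e := Fintype.equivFin σ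
  set q := rename e p
  have hq : q ≠ 0 := (rename_injective e e.injective).ne hp
  have hdeg : q.totalDegree = p.totalDegree := totalDegree_renameEquiv e p
  have hcard : #{x ∈ Fintype.piFinset fun _ : σ => S | eval x p ≠ 0} =
      #{x ∈ Fintype.piFinset fun _ : Fin (Fintype.card σ) => S | eval x q ≠ 0} := by
    refine card_nbij' (· ∘ e.symm) (· ∘ e) ?_ ?_ ?_ ?_ <;> intro x hx
    all_goals simp_all [q, eval_rename, Function.comp_def]
  have hzeros : 2 * #{x ∈ Fintype.piFinset fun _ : Fin (Fintype.card σ) => S | eval x q = 0} ≤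
      #S ^ Fintype.card σ := by
    have hsz := schwartz_zippel_totalDegree hq S
    rw [div_le_div_iff₀ (pow_pos (by norm_cast; omega) _) (by norm_cast; omega)] at hsz
    norm_cast at hsz
    rw [hdeg] at hsz
    refine Nat.le_of_mul_le_mul_right ?_ (show 0 < #S by omega)
    calc 2 * _ * #S ≤ 2 * p.totalDegree * #S ^ Fintype.card σ := by
          rw [mul_assoc, mul_assoc]
          exact Nat.mul_le_mul_left 2 hsz
      _ ≤ #S ^ Fintype.card σ * #S := by
          rw [mul_comm _ #S]
          exact Nat.mul_le_mul_right _ hS.le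
  have hsplit := card_filter_add_card_filter_not
    (s := Fintype.piFinset fun _ : Fin (Fintype.card σ) => S) (fun x => eval x q = 0)
  rw [Fintype.card_piFinset_const] at hsplit
  simp only [ne_eq] at hcard ⊢
  omega

theorem Matrix.rank_submatrix_eq_card_of_det_ne_zero {K m n r : Type*} [Field K] [Fintype n]
    [Fintype r] [DecidableEq r] (C : Matrix r n K) {ρ : m → r} {ι : r → m}
    (hρι : Function.LeftInverse ρ ι) {κ : r → n} (hdet : (C.submatrix id κ).det ≠ 0) :
    (C.submatrix ρ id).rank = Fintype.card r := by
  refine le_antisymm ((rank_submatrix_le C ρ id).trans C.rank_le_card_height) ?_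
  have hminor : (C.submatrix id κ).rank = Fintype.card r :=
    rank_of_isUnit _ ((isUnit_iff_isUnit_det _).2 hdet.isUnit)
  calc Fintype.card r = ((C.submatrix ρ id).submatrix ι κ).rank := by
        rw [submatrix_submatrix, hρι.comp_eq_id, Function.id_comp, hminor]
    _ ≤ (C.submatrix ρ id).rank := rank_submatrix_le _ _ _

theorem inv_two_mul_succ_pow_mul_pow_le {D H N k : ℕ} (hlarge : D ≤ H → H ^ k ≤ 2 * N)
    (hN : 1 ≤ N) : (2 * ((D : ℝ) + 1) ^ k)⁻¹ * (H : ℝ) ^ k ≤ N := by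
  have hD : (0 : ℝ) < (D + 1) ^ k := by positivity
  rw [inv_mul_le_iff₀ (by positivity)]
  by_cases hDH : D ≤ H
  · have h1 : ((H : ℝ) ^ k) ≤ 2 * N := by exact_mod_cast hlarge hDH
    have h2 : (1 : ℝ) ≤ (D + 1) ^ k := one_le_pow₀ (by linarith)
    nlinarith
  · have h1 : (H : ℝ) ^ k ≤ (D + 1) ^ k := by
      gcongr
      exact_mod_cast (by omega : H ≤ D + 1)
    have h2 : (1 : ℝ) ≤ N := by exact_mod_cast hN
    nlinarith

section ValueMatrix

variable (f : Polynomial ℤ) {r n : ℕ} (hrn : r ≤ n)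

noncomputable def valueMatrix {ι κ : Type*} (x : ι → κ → ℤ) : Matrix ι κ ℚ :=
  Matrix.of fun i j => ((f.eval (x i j) : ℤ) : ℚ)

noncomputable def leadingMinorPoly : MvPolynomial (Fin r × Fin n) ℤ :=
  (Matrix.of fun i j => f.toMvPolynomial (i, Fin.castLE hrn j)).det

theorem eval_leadingMinorPoly (w : Fin r × Fin n → ℤ) :
    ((eval w (leadingMinorPoly f hrn) : ℤ) : ℚ) =
      ((valueMatrix f (Function.curry w)).submatrix id (Fin.castLE hrn)).det := by
  rw [leadingMinorPoly, RingHom.map_det, Int.cast_det]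
  congr 1
  ext i j
  simp [valueMatrix]

theorem totalDegree_leadingMinorPoly_le :
    (leadingMinorPoly f hrn).totalDegree ≤ r * f.natDegree :=
  (totalDegree_det_le _ fun i j => f.totalDegree_toMvPolynomial_le (i, Fin.castLE hrn j)).trans
    (by rw [Fintype.card_fin])

noncomputable def nonsingularTopBlocks (H : ℕ) : Finset (Fin r × Fin n → ℤ) :=
  {w ∈ Fintype.piFinset fun _ => Icc (-(H : ℤ)) H | eval w (leadingMinorPoly f hrn) ≠ 0}

theorem one_le_card_nonsingularTopBlocks [NeZero r] {H : ℕ} {x : Fin r → Fin r → ℤ}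
    (hxH : ∀ i j, |x i j| ≤ (H : ℤ)) (hx : (valueMatrix f x).det ≠ 0) :
    1 ≤ #(nonsingularTopBlocks f hrn H) := by
  have hρ : Function.LeftInverse (Function.invFun (Fin.castLE hrn)) (Fin.castLE hrn) :=
    Function.leftInverse_invFun (Fin.castLE_injective hrn)
  let w : Fin r × Fin n → ℤ := fun p => x p.1 (Function.invFun (Fin.castLE hrn) p.2)
  have hminor : (valueMatrix f (Function.curry w)).submatrix id (Fin.castLE hrn) =
      valueMatrix f x := by
    ext i j
    simp [valueMatrix, w, hρ j]
  refine card_pos.2 ⟨w, mem_filter.2 ⟨Fintype.mem_piFinset.2 fun p => ?_, fun h0 => hx ?_⟩⟩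
  · exact mem_Icc.2 (abs_le.1 (hxH _ _))
  · rw [← hminor, ← eval_leadingMinorPoly, h0, Int.cast_zero]

theorem pow_le_two_mul_card_nonsingularTopBlocks {H : ℕ} (hH : r * f.natDegree ≤ H)
    (hne : (nonsingularTopBlocks f hrn H).Nonempty) :
    H ^ (n * r) ≤ 2 * #(nonsingularTopBlocks f hrn H) := by
  obtain ⟨w, hw⟩ := hne
  have hP : leadingMinorPoly f hrn ≠ 0 := fun h => (mem_filter.1 hw).2 (by rw [h, map_zero])
  have hcard : #(Icc (-(H : ℤ)) H) = 2 * H + 1 := by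
    rw [Int.card_Icc]
    omega
  calc H ^ (n * r) ≤ #(Icc (-(H : ℤ)) H) ^ Fintype.card (Fin r × Fin n) := by
        rw [hcard, Fintype.card_prod, Fintype.card_fin, Fintype.card_fin, mul_comm]
        exact Nat.pow_le_pow_left (by omega) _
    _ ≤ 2 * #(nonsingularTopBlocks f hrn H) := by
        refine card_pow_le_two_mul_card_eval_ne_zero hP _ ?_
        have := totalDegree_leadingMinorPoly_le f hrn
        omega

theorem card_nonsingularTopBlocks_le_ncard {m : ℕ} (hrm : r ≤ m) [NeZero r] (H : ℕ) :
    #(nonsingularTopBlocks f hrn H) ≤ Set.ncard {x : Fin m → Fin n → ℤ |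
      (∀ i j, |x i j| ≤ (H : ℤ)) ∧ (valueMatrix f x).rank = r} := by
  set ρ : Fin m → Fin r := Function.invFun (Fin.castLE hrm)
  have hρ : Function.LeftInverse ρ (Fin.castLE hrm) :=
    Function.leftInverse_invFun (Fin.castLE_injective hrm)
  rw [← Set.ncard_coe_finset]
  refine Set.ncard_le_ncard_of_injOn (fun w i j => w (ρ i, j)) ?_ ?_ ?_
  · intro w hw
    obtain ⟨hwH, hwP⟩ := mem_filter.1 (mem_coe.1 hw)
    refine ⟨fun i j => abs_le.2 (mem_Icc.1 (Fintype.mem_piFinset.1 hwH _)), ?_⟩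
    have hdet : ((valueMatrix f (Function.curry w)).submatrix id (Fin.castLE hrn)).det ≠ 0 := by
      rw [← eval_leadingMinorPoly]
      exact_mod_cast hwP
    exact ((valueMatrix f _).rank_submatrix_eq_card_of_det_ne_zero hρ hdet).trans
      (Fintype.card_fin r)
  · intro w _ w' _ h
    funext ⟨i, j⟩
    simpa [hρ i] using congr_fun (congr_fun h (Fin.castLE hrm i)) j
  · refine (Fintype.piFinset fun _ : Fin m => Fintype.piFinset fun _ : Fin n =>
      Icc (-(H : ℤ)) H).finite_toSet.subset fun x hx => ?_
    simp only [mem_coe, Fintype.mem_piFinset, mem_Icc]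
    exact fun i j => abs_le.1 (hx.1 i j)

end ValueMatrix

theorem stmt16_general (m n r : ℕ) (hr : 1 ≤ r) (hrm : r ≤ m) (hmn : m ≤ n)
    (f : Polynomial ℤ) :
    ∃ c : ℝ, 0 < c ∧ ∀ H : ℕ, 1 ≤ H →
      (∃ x : Fin r → Fin r → ℤ, (∀ i j, |x i j| ≤ (H : ℤ)) ∧
        (Matrix.of fun i j => ((f.eval (x i j) : ℤ) : ℚ)).det ≠ 0) →
      c * (H : ℝ) ^ (n * r) ≤
        (Set.ncard {x : Fin m → Fin n → ℤ | (∀ i j, |x i j| ≤ (H : ℤ)) ∧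
          (Matrix.of fun i j => ((f.eval (x i j) : ℤ) : ℚ)).rank = r} : ℝ) := by
  have hrn : r ≤ n := hrm.trans hmn
  have : NeZero r := ⟨by omega⟩
  refine ⟨(2 * ((r * f.natDegree : ℕ) + 1 : ℝ) ^ (n * r))⁻¹, by positivity, ?_⟩
  rintro H - ⟨x, hxH, hx⟩
  have hone := one_le_card_nonsingularTopBlocks f hrn hxH hx
  refine (inv_two_mul_succ_pow_mul_pow_le (fun hH => ?_) hone).trans
    (Nat.cast_le.2 (card_nonsingularTopBlocks_le_ncard f hrn hrm H))
  exact pow_le_two_mul_card_nonsingularTopBlocks f hrn hH (card_pos.1 hone)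

/-- Let `f ∈ ℤ[X]` be nonconstant and `n ≥ m ≥ r ≥ 1`. If for a given `H` there
exist `x i j ∈ [−H,H]` making the `r×r` matrix `(f (x i j))` nonsingular, then
the number of `m×n` matrices `(f (x i j))` with all `x i j ∈ [−H,H]` of rank
exactly `r` is `≫ H^{nr}`, with an implied constant depending only on
`f, m, n, r`. -/
theorem stmt16 (m n r : ℕ) (hr : 1 ≤ r) (hrm : r ≤ m) (hmn : m ≤ n)
    (f : Polynomial ℤ) (hf : 0 < f.natDegree) :
    ∃ c : ℝ, 0 < c ∧ ∀ H : ℕ, 1 ≤ H →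
      (∃ x : Fin r → Fin r → ℤ, (∀ i j, |x i j| ≤ (H : ℤ)) ∧
        (Matrix.of fun i j => ((f.eval (x i j) : ℤ) : ℚ)).det ≠ 0) →
      c * (H : ℝ) ^ (n * r) ≤
        (Set.ncard {x : Fin m → Fin n → ℤ | (∀ i j, |x i j| ≤ (H : ℤ)) ∧
          (Matrix.of fun i j => ((f.eval (x i j) : ℤ) : ℚ)).rank = r} : ℝ) :=
  stmt16_general m n r hr hrm hmn f
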